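/- Assume every arm's reward satisfies $\mathbb{E}[|X_n(1)|^p] \le u$ with $u > 0$, $p \in (1,2]$. Let $a = 4^{p/(1-p)}u^{1/(1-p)}$, choose $\delta \in (0, \Delta_2/2)$ and $w > 1/(a\delta^{p/(p-1)})$. Under the DSEE policy with exploration sequence including $t$ whenever $|\mathcal{A}(t-1)| < N\lceil w\log t\rceil$, and exploitation choosing the arm with largest truncated sample mean $\widehat{\theta}_n(\tau_n(t), \epsilon_n(t))$ with $\epsilon_n(t) = \exp(-a\delta^{p/(p-1)}\tau_n(t))$, the regret satisfies for all $T$: $R_T^{\pi^*}(\mathcal{F}) \le \sum_{n=2}^N \lceil w\log T\rceil \Delta_n + 2N\Delta_N(1 + \frac{1}{a\delta^{p/(p-1)}w - 1})$. -/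

import Mathlib

/-!
Split the regret into exploration and exploitation rounds. Exploration rounds play the arms
round-robin, and the rule defining `A` keeps `|A(T)| ≤ N ⌈w log T⌉`, so every arm is explored at
most `⌈w log T⌉` times up to `T`, arm `σ n` costing `Δ n` each time.

At an exploitation time `t` every arm has been explored at least `⌈w log t⌉` times, so each
truncated mean is `δ`-accurate except with probability `2 t^(-c)`, `c = a δ^(p/(p-1)) w > 1`.
When all of them are accurate, `2δ < Δ₂` forces the empirical argmax to be the best arm; a union
bound over the arms costs at most `2 N Δ_N t^(-c)` per round, and `∑ t^(-c) ≤ 1 + 1/(c-1)`.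
-/

open MeasureTheory Real Finset

theorem Real.sum_Icc_rpow_neg_le {c : ℝ} (hc : 1 < c) (T : ℕ) :
    ∑ t ∈ Icc 1 T, (t : ℝ) ^ (-c) ≤ 1 + 1 / (c - 1) := by
  rcases T.eq_zero_or_pos with rfl | hT
  · have : 0 < c - 1 := by linarith
    simp only [Icc_eq_empty_of_lt one_pos, sum_empty]
    positivity
  have hanti : AntitoneOn (fun x : ℝ => x ^ (-c)) (Set.Icc (1 : ℕ) T) := fun x hx y _ hxy =>
    rpow_le_rpow_of_nonpos (zero_lt_one.trans_le (by exact_mod_cast hx.1)) hxy (by linarith)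
  have hintegral : ∫ x in (1 : ℕ)..(T : ℝ), x ^ (-c) ≤ 1 / (c - 1) := by
    rw [integral_rpow (Or.inr ⟨by linarith, by simp [Set.uIcc_of_le (Nat.one_le_cast.2 hT)]⟩),
      Nat.cast_one, one_rpow, show -c + 1 = -(c - 1) by ring, div_neg, ← neg_div, neg_sub]
    gcongr
    linarith [show 0 ≤ (T : ℝ) ^ (-(c - 1)) by positivity]
  calc ∑ t ∈ Icc 1 T, (t : ℝ) ^ (-c)
      = 1 + ∑ i ∈ Ico 1 T, ((i + 1 : ℕ) : ℝ) ^ (-c) := by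
        rw [← Ico_add_one_right_eq_Icc, sum_eq_sum_Ico_succ_bot (by omega),
          ← sum_Ico_add' (fun k : ℕ => (k : ℝ) ^ (-c))]
        simp
    _ ≤ 1 + 1 / (c - 1) := by
        gcongr
        exact (hanti.sum_le_integral_Ico hT).trans hintegral

theorem Real.exp_neg_mul_le_rpow_neg {β w x τ : ℝ} (hβ : 0 ≤ β) (hx : 0 < x)
    (hτ : w * log x ≤ τ) : exp (-(β * τ)) ≤ x ^ (-(β * w)) := by
  rw [rpow_def_of_pos hx, exp_le_exp]
  nlinarith

theorem Real.monotone_mul_ceil_mul_log (N : ℕ) {w : ℝ} (hw : 0 ≤ w) :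
    Monotone fun t : ℕ => N * ⌈w * log t⌉₊ := by
  intro m n hmn
  refine Nat.mul_le_mul_left N (Nat.ceil_mono (mul_le_mul_of_nonneg_left ?_ hw))
  rcases m.eq_zero_or_pos with rfl | hm
  · simpa using log_natCast_nonneg n
  · exact log_le_log (by positivity) (by exact_mod_cast hmn)

theorem Nat.count_mod_eq_mul {N r : ℕ} (hr : r < N) (K : ℕ) :
    (N * K).count (· % N = r) = K := by
  have hp : (· % N = r) = (· ≡ r [MOD N]) := by
    funext j; rw [Nat.ModEq, Nat.mod_eq_of_lt hr]
  simp only [hp]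
  rw [Nat.count_modEq_card _ (by omega), Nat.mul_mod_right, Nat.mul_div_cancel_left _ (by omega)]
  simp

def explorationCount (A : Set ℕ) [DecidablePred (· ∈ A)] (t : ℕ) : ℕ :=
  #{s ∈ Icc 1 t | s ∈ A}

section explorationCount

variable {A : Set ℕ} [DecidablePred (· ∈ A)]

theorem explorationCount_succ (t : ℕ) :
    explorationCount A (t + 1) = explorationCount A t + if t + 1 ∈ A then 1 else 0 := by
  rw [explorationCount, explorationCount, ← insert_Icc_right_eq_Icc_add_one (by omega),
    filter_insert]
  split_ifs <;> simp [card_insert_of_notMem]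

theorem card_filter_explorationCount_sub_one_eq_count (p : ℕ → Prop) [DecidablePred p] (t : ℕ) :
    #{s ∈ Icc 1 t | s ∈ A ∧ p (explorationCount A s - 1)} = (explorationCount A t).count p := by
  induction t with
  | zero => simp [explorationCount]
  | succ t ih =>
    rw [← insert_Icc_right_eq_Icc_add_one (by omega), filter_insert, explorationCount_succ]
    by_cases hA : t + 1 ∈ A
    · by_cases hp : p (explorationCount A t)
      · simp [hA, hp, ih, card_insert_of_notMem, Nat.count_succ]
      · simp [hA, hp, ih, Nat.count_succ]
    · simp [hA, ih]

theorem explorationCount_le {g : ℕ → ℕ} (hg : Monotone g)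
    (hA : ∀ t, 1 ≤ t → (t ∈ A ↔ explorationCount A (t - 1) < g t)) (t : ℕ) :
    explorationCount A t ≤ g t := by
  induction t with
  | zero => simp [explorationCount]
  | succ t ih =>
    rw [explorationCount_succ]
    split_ifs with ht
    · exact (hA (t + 1) (by omega)).1 ht
    · simpa using ih.trans (hg t.le_succ)

theorem le_card_filter_explorationCount_mod {N r : ℕ} (hr : r < N) {g : ℕ → ℕ}
    (hA : ∀ t, 1 ≤ t → (t ∈ A ↔ explorationCount A (t - 1) < N * g t)) {t : ℕ} (ht : 1 ≤ t)
    (htA : t ∉ A) :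
    g t ≤ #{s ∈ Icc 1 (t - 1) | s ∈ A ∧ (explorationCount A s - 1) % N = r} := by
  rw [card_filter_explorationCount_sub_one_eq_count (· % N = r), ← Nat.count_mod_eq_mul hr (g t)]
  exact Nat.count_monotone _ (not_lt.1 (mt (hA t ht).2 htA))

end explorationCount

theorem Finset.sum_comp_le_mul_sum_of_card_fiber_le {ι κ : Type*} [Fintype κ] [DecidableEq κ]
    (s : Finset ι) (g : ι → κ) {f : κ → ℝ} (hf : ∀ k, 0 ≤ f k) {K : ℕ}
    (hK : ∀ k, #{i ∈ s | g i = k} ≤ K) :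
    ∑ i ∈ s, f (g i) ≤ K * ∑ k, f k := by
  rw [← sum_fiberwise' s g f, mul_sum]
  gcongr with k
  rw [sum_const, nsmul_eq_mul]
  gcongr
  exacts [hf k, hK k]

theorem sum_roundRobin_sub_le_mul_sum {N : ℕ} (hN : 0 < N) {θ : Fin N → ℝ} {θmax : ℝ}
    (hθ : ∀ i, θ i ≤ θmax) {A : Set ℕ} [DecidablePred (· ∈ A)] {T K : ℕ}
    (hK : explorationCount A T ≤ N * K) :
    ∑ t ∈ Icc 1 T with t ∈ A, (θmax - θ ⟨(explorationCount A t - 1) % N, Nat.mod_lt _ hN⟩)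
      ≤ K * ∑ i, (θmax - θ i) := by
  refine sum_comp_le_mul_sum_of_card_fiber_le (f := fun i => θmax - θ i) _
    (fun t => ⟨(explorationCount A t - 1) % N, Nat.mod_lt _ hN⟩) (fun i => sub_nonneg.2 (hθ i))
    fun i => ?_
  rw [filter_filter]
  simp_rw [Fin.ext_iff]
  rw [card_filter_explorationCount_sub_one_eq_count (· % N = i), ← Nat.count_mod_eq_mul i.isLt K]
  exact Nat.count_monotone _ hK

section SortedArms

variable {N : ℕ} {β : Type*} [Preorder β] {θ : Fin N → β} {σ : Equiv.Perm (Fin N)}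

theorem Antitone.apply_le_apply_perm_zero (hσ : Antitone (θ ∘ σ)) (hN : 0 < N) (i : Fin N) :
    θ i ≤ θ (σ ⟨0, hN⟩) := by
  simpa using hσ (show (⟨0, hN⟩ : Fin N) ≤ σ.symm i from Nat.zero_le _)

theorem Antitone.apply_perm_last_le (hσ : Antitone (θ ∘ σ)) (hN : 0 < N) (i : Fin N) :
    θ (σ ⟨N - 1, by omega⟩) ≤ θ i := by
  simpa using hσ (show σ.symm i ≤ ⟨N - 1, by omega⟩ from Nat.le_sub_one_of_lt (σ.symm i).isLt)

theorem Antitone.apply_le_apply_perm_one (hσ : Antitone (θ ∘ σ)) (hN : 1 < N) {i : Fin N}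
    (hi : i ≠ σ ⟨0, by omega⟩) : θ i ≤ θ (σ ⟨1, hN⟩) := by
  have hle : (⟨1, hN⟩ : Fin N) ≤ σ.symm i :=
    Nat.one_le_iff_ne_zero.2 fun h => hi (σ.symm_apply_eq.1 (Fin.ext h))
  simpa using hσ hle

end SortedArms

theorem eq_of_le_of_abs_sub_le {ι : Type*} {θ θhat : ι → ℝ} {b i : ι} {δ : ℝ}
    (hgap : i ≠ b → θ i + 2 * δ < θ b) (hi : |θhat i - θ i| ≤ δ) (hb : |θhat b - θ b| ≤ δ)
    (hle : θhat b ≤ θhat i) : i = b := by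
  by_contra hne
  have := hgap hne
  rw [abs_le] at hi hb
  linarith

section

variable {Ω ι : Type*} [MeasurableSpace Ω] {ℙ : Measure Ω} [IsFiniteMeasure ℙ]
  [Fintype ι] [MeasurableSpace ι] [MeasurableSingletonClass ι]
  {θ : ι → ℝ} {b : ι} {δ M : ℝ}

theorem integral_sub_le_of_measure_abs_sub_gt_le {X : Ω → ι} {θhat : ι → Ω → ℝ} {ε : ℝ}
    (hX : Measurable X) (hgap : ∀ i ≠ b, θ i + 2 * δ < θ b) (hM : ∀ i, θ b - θ i ≤ M)
    (hargmax : ∀ ω i, θhat i ω ≤ θhat (X ω) ω) (hε : 0 ≤ ε)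
    (hdev : ∀ i, ℙ {ω | δ < |θhat i ω - θ i|} ≤ ENNReal.ofReal ε) :
    ∫ ω, θ b - θ (X ω) ∂ℙ ≤ Fintype.card ι * ε * M := by
  set B := {ω | X ω ≠ b}
  have hB : MeasurableSet B := hX (measurableSet_singleton b).compl
  have hBsub : B ⊆ ⋃ i, {ω | δ < |θhat i ω - θ i|} := by
    intro ω hω
    by_contra hclose
    simp only [Set.mem_iUnion, Set.mem_ofPred_eq, not_exists, not_lt] at hclose
    exact hω (eq_of_le_of_abs_sub_le (θhat := (θhat · ω)) (hgap _) (hclose _) (hclose b)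
      (hargmax ω b))
  have hBε : ℙ.real B ≤ Fintype.card ι * ε := calc
    ℙ.real B ≤ ℙ.real (⋃ i, {ω | δ < |θhat i ω - θ i|}) := measureReal_mono hBsub
    _ ≤ ∑ i, ℙ.real {ω | δ < |θhat i ω - θ i|} := measureReal_iUnion_fintype_le _
    _ ≤ ∑ _i : ι, ε := sum_le_sum fun i _ => ENNReal.toReal_le_of_le_ofReal hε (hdev i)
    _ = Fintype.card ι * ε := by simp
  have hM0 : 0 ≤ M := by simpa using hM b
  calc ∫ ω, θ b - θ (X ω) ∂ℙ ≤ ∫ ω, B.indicator (fun _ => M) ω ∂ℙ := by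
        refine integral_mono ((integrable_const _).sub (Integrable.of_finite.comp_measurable hX))
          ((integrable_const M).indicator hB) fun ω => ?_
        by_cases hω : X ω = b
        · simp [B, hω]
        · simpa [B, hω] using hM (X ω)
    _ = ℙ.real B * M := by rw [integral_indicator_const _ hB, smul_eq_mul]
    _ ≤ Fintype.card ι * ε * M := by gcongr

theorem sum_integral_sub_le_of_measure_abs_sub_gt_le {X : ℕ → Ω → ι} {θhat : ι → ℕ → Ω → ℝ}
    {τ : ι → ℕ → ℕ} {β w : ℝ} (hβ : 0 ≤ β) (hc : 1 < β * w) {S : Finset ℕ} {T : ℕ}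
    (hS : S ⊆ Icc 1 T) (hX : ∀ t, Measurable (X t))
    (hgap : ∀ i ≠ b, θ i + 2 * δ < θ b) (hM : ∀ i, θ b - θ i ≤ M)
    (hargmax : ∀ t ∈ S, ∀ ω i, θhat i t ω ≤ θhat (X t ω) t ω)
    (hτ : ∀ t ∈ S, ∀ i, w * log t ≤ τ i t)
    (hdev : ∀ t ∈ S, ∀ i,
      ℙ {ω | δ < |θhat i t ω - θ i|} ≤ ENNReal.ofReal (2 * exp (-(β * τ i t)))) :
    ∑ t ∈ S, ∫ ω, θ b - θ (X t ω) ∂ℙ ≤ 2 * Fintype.card ι * M * (1 + 1 / (β * w - 1)) := by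
  have hM0 : 0 ≤ M := by simpa using hM b
  have hdev' : ∀ t ∈ S, ∀ i,
      ℙ {ω | δ < |θhat i t ω - θ i|} ≤ ENNReal.ofReal (2 * (t : ℝ) ^ (-(β * w))) :=
    fun t ht i => (hdev t ht i).trans <| ENNReal.ofReal_le_ofReal <| by
      have ht0 : (0 : ℝ) < t := by exact_mod_cast (mem_Icc.1 (hS ht)).1
      gcongr
      exact exp_neg_mul_le_rpow_neg hβ ht0 (hτ t ht i)
  calc ∑ t ∈ S, ∫ ω, θ b - θ (X t ω) ∂ℙ
      ≤ ∑ t ∈ S, Fintype.card ι * (2 * (t : ℝ) ^ (-(β * w))) * M :=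
        sum_le_sum fun t ht => integral_sub_le_of_measure_abs_sub_gt_le (hX t) hgap hM
          (hargmax t ht) (by positivity) (hdev' t ht)
    _ ≤ ∑ t ∈ Icc 1 T, Fintype.card ι * (2 * (t : ℝ) ^ (-(β * w))) * M :=
        sum_le_sum_of_subset_of_nonneg hS fun _ _ _ => by positivity
    _ = 2 * Fintype.card ι * M * ∑ t ∈ Icc 1 T, (t : ℝ) ^ (-(β * w)) := by
        rw [mul_sum]; exact sum_congr rfl fun _ _ => by ring
    _ ≤ 2 * Fintype.card ι * M * (1 + 1 / (β * w - 1)) := by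
        gcongr; exact Real.sum_Icc_rpow_neg_le hc T

end

theorem sum_integral_const_sub {Ω ι : Type*} [MeasurableSpace Ω] {ℙ : Measure Ω}
    [IsProbabilityMeasure ℙ] [Finite ι] [MeasurableSpace ι] [MeasurableSingletonClass ι]
    (θ : ι → ℝ) {X : ℕ → Ω → ι} (hX : ∀ t, Measurable (X t)) (c : ℝ) (T : ℕ) :
    ∑ t ∈ Icc 1 T, ∫ ω, c - θ (X t ω) ∂ℙ = T * c - ∑ t ∈ Icc 1 T, ∫ ω, θ (X t ω) ∂ℙ := by
  have hint : ∀ t, Integrable (fun ω => θ (X t ω)) ℙ := fun t =>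
    Integrable.of_finite.comp_measurable (hX t)
  rw [sum_congr rfl fun t _ => integral_sub (integrable_const _) (hint t)]
  simp [sum_sub_distrib]

/-- DSEE logarithmic regret for heavy-tailed rewards via truncated sample means
(Theorem 4): with `E[|Xₙ|^p] ≤ u`, `p ∈ (1,2]`, `a = 4^(p/(1-p)) u^(1/(1-p))`,
`δ ∈ (0, Δ₂/2)`, `w > 1/(a δ^(p/(p-1)))`, exploration sequence
`t ∈ A ↔ |A(t-1)| < N⌈w log t⌉` played round-robin, and exploitation playing the arm
with largest truncated sample mean satisfying the concentration bound
`Pr(|θ̂ₙ - θₙ| > δ) ≤ 2 exp(-a δ^(p/(p-1)) τₙ(t))`, the regret satisfies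
`R_T ≤ ∑_{n=2}^N ⌈w log T⌉ Δₙ + 2NΔ_N(1 + 1/(a δ^(p/(p-1)) w - 1))` for all `T`. -/
theorem dsee_regret_heavy_tailed_truncated {Ω : Type*} [MeasurableSpace Ω]
    (ℙ : Measure Ω) [IsProbabilityMeasure ℙ]
    (N : ℕ) (hN : 2 ≤ N) (θ : Fin N → ℝ)
    (σ : Equiv.Perm (Fin N)) (hσ : ∀ i j : Fin N, i ≤ j → θ (σ j) ≤ θ (σ i))
    (Δ : Fin N → ℝ) (hΔ : ∀ n, Δ n = θ (σ ⟨0, by omega⟩) - θ (σ n))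
    (u p : ℝ) (hu : 0 < u)
    (a : ℝ) (ha : a = 4 ^ (p / (1 - p)) * u ^ ((1 : ℝ) / (1 - p)))
    (δ w : ℝ) (hδ : δ ∈ Set.Ioo 0 (Δ ⟨1, by omega⟩ / 2))
    (hw : 1 / (a * δ ^ (p / (p - 1))) < w)
    (A : Set ℕ) [DecidablePred (· ∈ A)]
    (cnt : ℕ → ℕ) (hcnt : ∀ t, cnt t = ((Finset.Icc 1 t).filter (· ∈ A)).card)
    (hA : ∀ t, 1 ≤ t → (t ∈ A ↔ cnt (t - 1) < N * ⌈w * Real.log t⌉₊))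
    (pol : ℕ → Ω → Fin N) (hpolmeas : ∀ t, Measurable (pol t))
    (hround : ∀ t ∈ A, ∀ ω, pol t ω = ⟨(cnt t - 1) % N, Nat.mod_lt _ (by omega)⟩)
    (τ : Fin N → ℕ → ℕ)
    (hτ : ∀ n t, τ n t = ((Finset.Icc 1 (t - 1)).filter
      (fun s => s ∈ A ∧ (cnt s - 1) % N = (n : ℕ))).card)
    -- truncated sample means and their concentration bound
    (θhat : Fin N → ℕ → Ω → ℝ)
    (hdev : ∀ n t, 1 ≤ t → t ∉ A →
      ℙ {ω | δ < |θhat n t ω - θ n|} ≤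
        ENNReal.ofReal (2 * exp (-(a * δ ^ (p / (p - 1)) * τ n t))))
    (hexploit : ∀ t, 1 ≤ t → t ∉ A → ∀ ω, ∀ n, θhat n t ω ≤ θhat (pol t ω) t ω)
    (R : ℕ → ℝ)
    (hR : ∀ T, R T = T * θ (σ ⟨0, by omega⟩)
      - ∑ t ∈ Finset.Icc 1 T, ∫ ω, θ (pol t ω) ∂ℙ) :
    ∀ T, R T ≤ (∑ n ∈ Finset.univ.erase (⟨0, by omega⟩ : Fin N),
        (⌈w * Real.log T⌉₊ : ℝ) * Δ n)
      + 2 * N * Δ ⟨N - 1, by omega⟩ * (1 + 1 / (a * δ ^ (p / (p - 1)) * w - 1)) := by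
  intro T
  obtain rfl : cnt = explorationCount A := funext hcnt
  have hN0 : 0 < N := by omega
  have hsorted : Antitone (θ ∘ σ) := fun i j h => hσ i j h
  have hM : ∀ i, θ (σ ⟨0, hN0⟩) - θ i ≤ Δ ⟨N - 1, by omega⟩ := fun i => by
    linarith [hΔ ⟨N - 1, by omega⟩, hsorted.apply_perm_last_le hN0 i]
  have hgap : ∀ i ≠ σ ⟨0, hN0⟩, θ i + 2 * δ < θ (σ ⟨0, hN0⟩) := fun i hi => by
    linarith [hsorted.apply_le_apply_perm_one (by omega) hi, hΔ ⟨1, by omega⟩, hδ.2]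
  have hβ : 0 < a * δ ^ (p / (p - 1)) := by rw [ha]; have := hδ.1; positivity
  have hc : 1 < a * δ ^ (p / (p - 1)) * w := by rwa [div_lt_iff₀' hβ] at hw
  have hS : ∀ t ∈ {t ∈ Icc 1 T | t ∉ A}, 1 ≤ t ∧ t ∉ A := fun t ht =>
    ⟨(mem_Icc.1 (mem_filter.1 ht).1).1, (mem_filter.1 ht).2⟩
  have hτlog : ∀ t ∈ {t ∈ Icc 1 T | t ∉ A}, ∀ n, w * log t ≤ τ n t := fun t ht n =>
    (Nat.le_ceil _).trans <| by
      rw [hτ]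
      exact_mod_cast le_card_filter_explorationCount_mod n.isLt (g := fun t => ⌈w * log t⌉₊) hA
        (hS t ht).1 (hS t ht).2
  rw [hR, ← sum_integral_const_sub θ hpolmeas, ← sum_filter_add_sum_filter_not _ (· ∈ A)]
  refine add_le_add ?_ ?_
  · calc _ = ∑ t ∈ Icc 1 T with t ∈ A,
          (θ (σ ⟨0, hN0⟩) - θ ⟨(explorationCount A t - 1) % N, Nat.mod_lt _ hN0⟩) :=
        sum_congr rfl fun t ht => by simp [hround t (mem_filter.1 ht).2]
      _ ≤ ⌈w * log T⌉₊ * ∑ i, (θ (σ ⟨0, hN0⟩) - θ i) :=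
        sum_roundRobin_sub_le_mul_sum hN0 (hsorted.apply_le_apply_perm_zero hN0)
          (explorationCount_le (monotone_mul_ceil_mul_log N ((one_div_pos.2 hβ).trans hw).le) hA T)
      _ = _ := by
        rw [← mul_sum, sum_erase _ (by rw [hΔ, sub_self]), ← Equiv.sum_comp σ]
        simp only [hΔ]
  · refine (sum_integral_sub_le_of_measure_abs_sub_gt_le hβ.le hc (filter_subset _ _) hpolmeas
      hgap hM (fun t ht => hexploit t (hS t ht).1 (hS t ht).2) hτlog
      fun t ht n => hdev n t (hS t ht).1 (hS t ht).2).trans_eq ?_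
    simp
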